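/- For any symmetric-parametrization list 𝒫, one has M(𝒫⁻) + M(𝒫⁺) ≤ 2·M(𝒫). -/

import Mathlib

open Finset
open scoped Classical

noncomputable section

/-- The value `M(P) = ∑ v, μ v * |θ v|` of a symmetric-parametrization list
`P = ((μ v, θ v))_v`. -/
def Mval {V : Type*} [Fintype V] (μ θ : V → ℝ) : ℝ := ∑ v, μ v * |θ v|

/-- Weights of the minus transform `P⁻`. -/
def minusμ {V : Type*} (μ : V → ℝ) : V × V → ℝ := fun p => μ p.1 * μ p.2

/-- Parameters of the minus transform `P⁻`. -/
def minusθ {V : Type*} (θ : V → ℝ) : V × V → ℝ := fun p => θ p.1 * θ p.2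

/-- The sign `∓ᵤ` : `-1` when `u = 1` (`true`), `+1` when `u = 0` (`false`). -/
def sgn : Bool → ℝ := fun u => if u then -1 else 1

/-- Weights of the plus transform `P⁺`
(when `1 ∓ᵤ θ₀ θ₁ = 0` the formula yields `0`, matching the convention that the
entry is then `(0, 0)`). -/
def plusμ {V : Type*} (μ θ : V → ℝ) : Bool × V × V → ℝ :=
  fun p => μ p.2.1 * μ p.2.2 * (1 + sgn p.1 * (θ p.2.1 * θ p.2.2)) / 2

/-- Parameters of the plus transform `P⁺`
(division by zero is `0` in Lean, matching the convention that the entry is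
`(0, 0)` when `1 ∓ᵤ θ₀ θ₁ = 0`). -/
def plusθ {V : Type*} (θ : V → ℝ) : Bool × V × V → ℝ :=
  fun p => (θ p.2.2 + sgn p.1 * θ p.2.1) / (1 + sgn p.1 * (θ p.2.1 * θ p.2.2))

/-
Both transforms act pairwise: the pair `(θ₀, θ₁)` contributes `μ₀ μ₁ |θ₀ θ₁|` to `M(𝒫⁻)` and,
since the normalising factor `1 ∓ θ₀ θ₁` of `θ⁺` cancels against the weight `μ⁺`,
`μ₀ μ₁ (|θ₁ - θ₀| + |θ₁ + θ₀|) / 2 = μ₀ μ₁ max(|θ₀|, |θ₁|)` to `M(𝒫⁺)`.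
As `|θ₀ θ₁| ≤ min(|θ₀|, |θ₁|)`, each pair contributes at most `μ₀ μ₁ (|θ₀| + |θ₁|)`,
and these sum to `2 M(𝒫)` because the weights sum to `1`.
-/

lemma sgn_sq (u : Bool) : sgn u ^ 2 = 1 := by
  cases u <;> norm_num [sgn]

lemma abs_sgn (u : Bool) : |sgn u| = 1 := by
  cases u <;> norm_num [sgn]

lemma one_add_sgn_mul_nonneg (u : Bool) {x y : ℝ} (hx : |x| ≤ 1) (hy : |y| ≤ 1) :
    0 ≤ 1 + sgn u * (x * y) := by
  have : |sgn u * (x * y)| ≤ 1 := by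
    rw [abs_mul, abs_sgn, one_mul, abs_mul]
    exact mul_le_one₀ hx (abs_nonneg y) hy
  linarith [neg_abs_le (sgn u * (x * y))]

-- `(y ± x)² = x² + y² - 2` when `1 ± x y = 0`, and `x² + y² ≤ 2`.
lemma add_sgn_mul_eq_zero_of_one_add_sgn_mul_eq_zero (u : Bool) {x y : ℝ} (hx : |x| ≤ 1)
    (hy : |y| ≤ 1) (h : 1 + sgn u * (x * y) = 0) : y + sgn u * x = 0 := by
  have hx2 : x ^ 2 ≤ 1 := by nlinarith [sq_abs x, abs_nonneg x]
  have hy2 : y ^ 2 ≤ 1 := by nlinarith [sq_abs y, abs_nonneg y]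
  have hsq : (y + sgn u * x) ^ 2 = x ^ 2 + y ^ 2 - 2 := by
    linear_combination 2 * h + x ^ 2 * sgn_sq u
  exact pow_eq_zero_iff two_ne_zero |>.mp (le_antisymm (by linarith) (sq_nonneg _))

lemma mul_abs_div_of_nonneg {a d : ℝ} (hd : 0 ≤ d) (ha : d = 0 → a = 0) : d * |a / d| = |a| := by
  rcases hd.eq_or_lt with h | h
  · simp [← h, ha h.symm]
  · rw [abs_div, abs_of_pos h, mul_div_cancel₀ _ h.ne']

lemma plusμ_mul_abs_plusθ {V : Type*} (μ θ : V → ℝ) (hθ : ∀ v, |θ v| ≤ 1) (p : Bool × V × V) :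
    plusμ μ θ p * |plusθ θ p| = μ p.2.1 * μ p.2.2 * |θ p.2.2 + sgn p.1 * θ p.2.1| / 2 := by
  obtain ⟨u, v₀, v₁⟩ := p
  have hcancel := mul_abs_div_of_nonneg (one_add_sgn_mul_nonneg u (hθ v₀) (hθ v₁))
    (add_sgn_mul_eq_zero_of_one_add_sgn_mul_eq_zero u (hθ v₀) (hθ v₁))
  simp only [plusμ, plusθ] at hcancel ⊢
  rw [div_mul_eq_mul_div, mul_assoc, hcancel]

lemma Mval_plus {V : Type*} [Fintype V] (μ θ : V → ℝ) (hθ : ∀ v, |θ v| ≤ 1) :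
    Mval (plusμ μ θ) (plusθ θ) =
      ∑ p : V × V, μ p.1 * μ p.2 * ((|θ p.2 - θ p.1| + |θ p.2 + θ p.1|) / 2) := by
  simp only [Mval, plusμ_mul_abs_plusθ μ θ hθ, Fintype.sum_prod_type, Fintype.sum_bool]
  rw [← Finset.sum_add_distrib]
  refine Finset.sum_congr rfl fun v₀ _ => ?_
  rw [← Finset.sum_add_distrib]
  refine Finset.sum_congr rfl fun v₁ _ => ?_
  simp only [sgn, if_true, Bool.false_eq_true, if_false, neg_one_mul, ← sub_eq_add_neg, one_mul]
  ring

lemma two_mul_Mval_eq_sum_prod {V : Type*} [Fintype V] (μ θ : V → ℝ) (hsum : ∑ v, μ v = 1) :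
    2 * Mval μ θ = ∑ p : V × V, μ p.1 * μ p.2 * (|θ p.1| + |θ p.2|) := by
  simp only [Mval, Fintype.sum_prod_type, mul_add, Finset.sum_add_distrib]
  have h₀ : ∑ v₀, ∑ v₁, μ v₀ * μ v₁ * |θ v₀| = ∑ v, μ v * |θ v| := by
    simp only [mul_right_comm _ (μ _), ← Finset.mul_sum, hsum, mul_one]
  have h₁ : ∑ v₀, ∑ v₁, μ v₀ * μ v₁ * |θ v₁| = ∑ v, μ v * |θ v| := by
    simp only [mul_assoc, ← Finset.mul_sum, ← Finset.sum_mul, hsum, one_mul]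
  rw [h₀, h₁, two_mul]

lemma abs_sub_add_abs_add (x y : ℝ) : |y - x| + |y + x| = 2 * max |x| |y| := by
  rcases max_cases |x| |y| with ⟨hmax, _⟩ | ⟨hmax, _⟩ <;> rw [hmax] <;>
    rcases abs_cases x with ⟨hx, _⟩ | ⟨hx, _⟩ <;> rcases abs_cases y with ⟨hy, _⟩ | ⟨hy, _⟩ <;>
    rcases abs_cases (y - x) with ⟨h₁, _⟩ | ⟨h₁, _⟩ <;>
    rcases abs_cases (y + x) with ⟨h₂, _⟩ | ⟨h₂, _⟩ <;> linarith

lemma abs_mul_add_half_abs_sub_add_abs_le {x y : ℝ} (hx : |x| ≤ 1) (hy : |y| ≤ 1) :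
    |x * y| + (|y - x| + |y + x|) / 2 ≤ |x| + |y| := by
  have hmin : |x * y| ≤ min |x| |y| := by
    rw [abs_mul]
    exact le_min (mul_le_of_le_one_right (abs_nonneg x) hy)
      (mul_le_of_le_one_left (abs_nonneg y) hx)
  rw [abs_sub_add_abs_add, mul_div_cancel_left₀ _ two_ne_zero]
  linarith [min_add_max |x| |y|]

theorem stmt4 {V : Type*} [Fintype V] (μ θ : V → ℝ)
    (hμ : ∀ v, 0 ≤ μ v) (hsum : ∑ v, μ v = 1) (hθ : ∀ v, θ v ∈ Set.Icc (-1 : ℝ) 1) :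
    Mval (minusμ μ) (minusθ θ) + Mval (plusμ μ θ) (plusθ θ) ≤ 2 * Mval μ θ := by
  have hθ' : ∀ v, |θ v| ≤ 1 := fun v => abs_le.mpr (hθ v)
  rw [Mval_plus μ θ hθ', two_mul_Mval_eq_sum_prod μ θ hsum, Mval, ← Finset.sum_add_distrib]
  refine Finset.sum_le_sum fun p _ => ?_
  rw [minusμ, minusθ, ← mul_add]
  exact mul_le_mul_of_nonneg_left (abs_mul_add_half_abs_sub_add_abs_le (hθ' p.1) (hθ' p.2))
    (mul_nonneg (hμ p.1) (hμ p.2))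

end
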